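/- (Completeness for I') For all A, B ∈ L', if v(A) = v(B) in L₁, then A = B is provable in the equational calculus I'. -/

import Mathlib

/-- Binary trees: the set `L₁` generated by `□` and `∧`. -/
inductive L1 : Type
  | box : L1
  | wedge : L1 → L1 → L1
  deriving DecidableEq

namespace L1

/-- `|X|`: the number of occurrences of `□` in `X`. -/
def leaves : L1 → ℕ
  | box => 1
  | wedge X Y => X.leaves + Y.leaves

/-- Insertion `X ◁ₙ Z` in `L₁` (total extension of the partial operation;
on its domain `1 ≤ n ≤ |X|` it agrees with the defining clauses). -/
def ins : L1 → ℕ → L1 → L1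
  | box, _, Z => Z
  | wedge X Y, n, Z =>
      if n ≤ X.leaves then wedge (X.ins n Z) Y else wedge X (Y.ins (n - X.leaves) Z)

end L1

/-- Raw terms over the generators `1`, `2` and the insertion operations `◁ₙ`. -/
inductive Tp : Type
  | one : Tp
  | two : Tp
  | ins : Tp → ℕ → Tp → Tp
  deriving DecidableEq

namespace Tp

/-- `|1| = 1`, `|2| = 2` and `|A ◁ₙ B| = |A| + |B| - 1`. -/
def size : Tp → ℕ
  | one => 1
  | two => 2
  | ins A _ B => A.size + B.size - 1

/-- Membership in `L'`: each insertion `A ◁ₙ B` requires `1 ≤ n ≤ |A|`. -/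
def WF : Tp → Prop
  | one => True
  | two => True
  | ins A n B => A.WF ∧ B.WF ∧ 1 ≤ n ∧ n ≤ A.size

/-- The interpretation `v : L' → L₁`: `v 1 = □`, `v 2 = □∧□`,
`v (A ◁ₙ B) = v A ◁ₙ v B`. -/
def val : Tp → L1
  | one => L1.box
  | two => L1.wedge L1.box L1.box
  | ins A n B => A.val.ins n B.val

end Tp

/-- The equational calculus `I'` on `L'`: the congruence generated by
(assoc 1), (assoc 2) and (unit). -/
inductive Ip : Tp → Tp → Prop
  | refl (A : Tp) (h : A.WF) : Ip A A
  | symm {A B : Tp} : Ip A B → Ip B A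
  | trans {A B C : Tp} : Ip A B → Ip B C → Ip A C
  | congr {A B C D : Tp} {n : ℕ} : Ip A B → Ip C D →
      (Tp.ins A n C).WF → (Tp.ins B n D).WF →
      Ip (Tp.ins A n C) (Tp.ins B n D)
  | assoc1 {A B C : Tp} {n m : ℕ} :
      ((A.ins n B).ins m C).WF → n ≤ m → m < n + B.size →
      Ip ((A.ins n B).ins m C) (A.ins n (B.ins (m - n + 1) C))
  | assoc2 {A B C : Tp} {n m : ℕ} :
      ((A.ins n B).ins m C).WF → n + B.size ≤ m →
      Ip ((A.ins n B).ins m C) ((A.ins (m - B.size + 1) C).ins n B)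
  | unit1 {A : Tp} : A.WF → Ip (Tp.one.ins 1 A) A
  | unit2 {A : Tp} {n : ℕ} : A.WF → 1 ≤ n → n ≤ A.size → Ip (A.ins n Tp.one) A

namespace L1

lemma leaves_pos : ∀ X : L1, 1 ≤ X.leaves
  | box => le_refl _
  | wedge X Y => by have := leaves_pos X; have := leaves_pos Y; simp [leaves]; omega

lemma leaves_ins : ∀ (X : L1) (n : ℕ) (Z : L1), n ≤ X.leaves →
    (X.ins n Z).leaves = X.leaves + Z.leaves - 1
  | box, n, Z, _ => by simp [ins, leaves]
  | wedge X Y, n, Z, h => by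
    by_cases hn : n ≤ X.leaves
    · have := Z.leaves_pos
      simp [ins, hn, leaves, leaves_ins X n Z hn]; omega
    · have h2 : n - X.leaves ≤ Y.leaves := by simp [leaves] at h; omega
      have := Z.leaves_pos; have := X.leaves_pos
      simp [ins, hn, leaves, leaves_ins Y _ Z h2]; omega

end L1

namespace Tp

lemma val_leaves : ∀ {A : Tp}, A.WF → A.val.leaves = A.size
  | .one, _ => rfl
  | .two, _ => rfl
  | .ins A n B, ⟨hA, hB, _, h2⟩ => by
    simp only [val, size]
    rw [L1.leaves_ins _ _ _ (by rw [val_leaves hA]; exact h2),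
      val_leaves hA, val_leaves hB]

end Tp

/-- Canonical term for a tree. -/
def canon : L1 → Tp
  | .box => .one
  | .wedge X Y => .ins (.ins .two 1 (canon X)) (X.leaves + 1) (canon Y)

lemma canon_size : ∀ X : L1, (canon X).size = X.leaves
  | .box => rfl
  | .wedge X Y => by
    have := X.leaves_pos; have := Y.leaves_pos
    simp [canon, Tp.size, canon_size X, canon_size Y, L1.leaves]; omega

lemma canon_wf : ∀ X : L1, (canon X).WF
  | .box => trivial
  | .wedge X Y => by
    have := X.leaves_pos
    exact ⟨⟨trivial, canon_wf X, le_refl _, by simp [Tp.size]⟩, canon_wf Y,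
      by omega, by simp [Tp.size, canon_size]⟩

lemma canon_val : ∀ X : L1, (canon X).val = X
  | .box => rfl
  | .wedge X Y => by
    simp only [canon, Tp.val, canon_val X, canon_val Y]
    simp [L1.ins, L1.leaves]

lemma key (Z : L1) : ∀ (X : L1) (n : ℕ), 1 ≤ n → n ≤ X.leaves →
    Ip ((canon X).ins n (canon Z)) (canon (X.ins n Z))
  | .box, n, h1, h2 => by
    have : n = 1 := le_antisymm h2 h1
    subst this
    simpa [canon, L1.ins] using Ip.unit1 (canon_wf Z)
  | .wedge X Y, n, h1, h2 => by
    have lxp := X.leaves_pos; have lyp := Y.leaves_pos; have lzp := Z.leaves_pos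
    have sX := canon_size X; have sY := canon_size Y; have sZ := canon_size Z
    simp only [L1.leaves] at h2
    set D : Tp := Tp.ins .two 1 (canon X) with hD
    have wfD : D.WF := ⟨trivial, canon_wf X, le_refl _, by simp [Tp.size]⟩
    have sD : D.size = X.leaves + 1 := by simp [hD, Tp.size, sX]; omega
    by_cases hn : n ≤ X.leaves
    · have wfDZ : (D.ins n (canon Z)).WF := ⟨wfD, canon_wf Z, h1, by omega⟩
      have sDZ : (D.ins n (canon Z)).size = X.leaves + Z.leaves := by
        simp [Tp.size, sD, sZ]
      have sXZ : (canon (X.ins n Z)).size = X.leaves + Z.leaves - 1 := by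
        rw [canon_size, L1.leaves_ins X n Z hn]
      have s1 : Ip ((D.ins n (canon Z)).ins (X.leaves + Z.leaves) (canon Y))
          ((D.ins (X.leaves + 1) (canon Y)).ins n (canon Z)) := by
        have := Ip.assoc2 (A := D) (B := canon Z) (C := canon Y)
          (n := n) (m := X.leaves + Z.leaves)
          ⟨wfDZ, canon_wf Y, by omega, by omega⟩ (by omega)
        rwa [show X.leaves + Z.leaves - (canon Z).size + 1 = X.leaves + 1 by omega] at this
      have wfa : (Tp.ins .two 1 ((canon X).ins n (canon Z))).WF :=
        ⟨trivial, ⟨canon_wf X, canon_wf Z, h1, by omega⟩, le_refl _, by simp [Tp.size]⟩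
      have wfb : (Tp.ins .two 1 (canon (X.ins n Z))).WF :=
        ⟨trivial, canon_wf _, le_refl _, by simp [Tp.size]⟩
      have s2 : Ip (D.ins n (canon Z)) (Tp.ins .two 1 ((canon X).ins n (canon Z))) := by
        have := Ip.assoc1 (A := Tp.two) (B := canon X) (C := canon Z) (n := 1) (m := n)
          wfDZ h1 (by omega)
        rwa [show n - 1 + 1 = n by omega] at this
      have s3 : Ip ((canon X).ins n (canon Z)) (canon (X.ins n Z)) := key Z X n h1 hn
      have s23 : Ip (D.ins n (canon Z)) (Tp.ins .two 1 (canon (X.ins n Z))) :=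
        s2.trans (Ip.congr (Ip.refl .two trivial) s3 wfa wfb)
      have s4 : Ip ((D.ins n (canon Z)).ins (X.leaves + Z.leaves) (canon Y))
          ((Tp.ins .two 1 (canon (X.ins n Z))).ins (X.leaves + Z.leaves) (canon Y)) :=
        Ip.congr s23 (Ip.refl (canon Y) (canon_wf Y))
          ⟨wfDZ, canon_wf Y, by omega, by rw [sDZ]⟩
          ⟨wfb, canon_wf Y, by omega, by simp [Tp.size, sXZ]; omega⟩
      simp only [canon, L1.ins, if_pos hn]
      rw [L1.leaves_ins X n Z hn,
        show X.leaves + Z.leaves - 1 + 1 = X.leaves + Z.leaves by omega]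
      exact (s1.symm).trans s4
    · have hn' : X.leaves < n := lt_of_not_ge hn
      have wfT : ((D.ins (X.leaves + 1) (canon Y)).ins n (canon Z)).WF :=
        ⟨⟨wfD, canon_wf Y, by omega, by rw [sD]⟩, canon_wf Z, h1,
          by simp [Tp.size, sD, sY]; omega⟩
      have s1 : Ip ((D.ins (X.leaves + 1) (canon Y)).ins n (canon Z))
          (D.ins (X.leaves + 1) ((canon Y).ins (n - X.leaves) (canon Z))) := by
        have := Ip.assoc1 (A := D) (B := canon Y) (C := canon Z)
          (n := X.leaves + 1) (m := n) wfT (by omega) (by omega)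
        rwa [show n - (X.leaves + 1) + 1 = n - X.leaves by omega] at this
      have s2 : Ip ((canon Y).ins (n - X.leaves) (canon Z)) (canon (Y.ins (n - X.leaves) Z)) :=
        key Z Y (n - X.leaves) (by omega) (by omega)
      have s3 : Ip (D.ins (X.leaves + 1) ((canon Y).ins (n - X.leaves) (canon Z)))
          (D.ins (X.leaves + 1) (canon (Y.ins (n - X.leaves) Z))) :=
        Ip.congr (Ip.refl D wfD) s2
          ⟨wfD, ⟨canon_wf Y, canon_wf Z, by omega, by omega⟩, by omega, by rw [sD]⟩
          ⟨wfD, canon_wf _, by omega, by rw [sD]⟩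
      simp only [canon, L1.ins, if_neg hn]
      exact s1.trans s3

lemma to_canon : ∀ {A : Tp}, A.WF → Ip A (canon A.val)
  | .one, _ => Ip.refl _ trivial
  | .two, _ => by
    have h1 : Ip (Tp.ins (Tp.ins .two 1 .one) 2 .one) (Tp.ins .two 1 .one) :=
      Ip.unit2 ⟨trivial, trivial, le_refl _, by simp [Tp.size]⟩ (by norm_num)
        (by simp [Tp.size])
    have h2 : Ip (Tp.ins .two 1 .one) .two :=
      Ip.unit2 trivial le_rfl (by simp [Tp.size])
    exact Ip.symm (h1.trans h2)
  | .ins A n B, ⟨hA, hB, h1, h2⟩ => by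
    have e1 : Ip (Tp.ins A n B) (Tp.ins (canon A.val) n (canon B.val)) :=
      Ip.congr (to_canon hA) (to_canon hB) ⟨hA, hB, h1, h2⟩
        ⟨canon_wf _, canon_wf _, h1, by rw [canon_size, Tp.val_leaves hA]; exact h2⟩
    have e2 : Ip (Tp.ins (canon A.val) n (canon B.val)) (canon (A.val.ins n B.val)) :=
      key B.val A.val n h1 (by rw [Tp.val_leaves hA]; exact h2)
    exact e1.trans e2

theorem completeness_Ip {A B : Tp} (hA : A.WF) (hB : B.WF)
    (h : A.val = B.val) : Ip A B := by
  have := to_canon hA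
  rw [h] at this
  exact this.trans (Ip.symm (to_canon hB))
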